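/- Let V be a finite-dimensional vector space over an algebraically closed field F of characteristic zero equipped with a nondegenerate symmetric bilinear form B, and let X ∈ so(V) (i.e. B(Xv, w) + B(v, Xw) = 0 for all v, w). If for some λ ∈ F one has 2·rank(X - λ·Id_V) < dim V, then λ = 0. -/

import Mathlib

/-!
For `λ ≠ 0` the eigenspace `ker (X - λ)` of a skew-adjoint `X` is totally isotropic, since
`λ + λ ≠ 0`; a totally isotropic subspace of a nondegenerate form has at most half the dimension
of `V`, so by rank-nullity `2 · rank (X - λ) ≥ dim V`.
-/

open Module

namespace LinearMap.BilinForm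

variable {K V : Type*} [Field K] [AddCommGroup V] [Module K V]

/-- `μ B(v, w) = B(Xv, w) = -B(v, Xw) = -ν B(v, w)` for `Xv = μ v`, `Xw = ν w`. -/
lemma eigenspace_le_orthogonal_eigenspace {B : LinearMap.BilinForm K V} {X : End K V}
    (hX : ∀ v w : V, B (X v) w = -B v (X w)) {μ ν : K} (hμν : μ + ν ≠ 0) :
    End.eigenspace X ν ≤ B.orthogonal (End.eigenspace X μ) := by
  intro w hw
  rw [mem_orthogonal_iff]
  intro v hv
  have hskew := hX v w
  rw [End.mem_eigenspace_iff.mp hv, End.mem_eigenspace_iff.mp hw, map_smul, map_smul,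
    LinearMap.smul_apply, smul_eq_mul, smul_eq_mul] at hskew
  have hsum : (μ + ν) * B v w = 0 := by linear_combination hskew
  exact (mul_eq_zero.mp hsum).resolve_left hμν

lemma two_mul_finrank_le_of_le_orthogonal [FiniteDimensional K V] {B : LinearMap.BilinForm K V}
    (hB : B.Nondegenerate) {W : Submodule K V} (hW : W ≤ B.orthogonal W) :
    2 * finrank K W ≤ finrank K V := by
  have hle := Submodule.finrank_mono hW
  rw [finrank_orthogonal hB] at hle
  have := Submodule.finrank_le W
  omega

end LinearMap.BilinForm

theorem stmt_6_general (F V : Type*) [Field F] [CharZero F]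
    [AddCommGroup V] [Module F V] [FiniteDimensional F V]
    (ω : LinearMap.BilinForm F V) (hnd : ω.Nondegenerate)
    (X : Module.End F V) (hX : ∀ v w : V, ω (X v) w = - ω v (X w))
    (lam : F)
    (h : 2 * finrank F ↥(LinearMap.range (X - lam • 1)) < finrank F V) :
    lam = 0 := by
  by_contra hlam
  have hiso := LinearMap.BilinForm.eigenspace_le_orthogonal_eigenspace hX (μ := lam) (ν := lam)
    (by rwa [← two_mul, mul_ne_zero_iff, and_iff_right two_ne_zero])
  have hker := LinearMap.BilinForm.two_mul_finrank_le_of_le_orthogonal hnd hiso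
  rw [End.eigenspace_def] at hker
  have := LinearMap.finrank_range_add_finrank_ker (X - lam • 1)
  omega

/-- For `X ∈ so(V)` (skew w.r.t. a nondegenerate symmetric form `B`), if
`2·rank(X - λ·Id) < dim V` for some scalar `λ`, then `λ = 0`. -/
theorem stmt_6 (F V : Type*) [Field F] [IsAlgClosed F] [CharZero F]
    [AddCommGroup V] [Module F V] [FiniteDimensional F V]
    (ω : LinearMap.BilinForm F V) (hnd : ω.Nondegenerate)
    (hsymm : ∀ v w : V, ω v w = ω w v)
    (X : Module.End F V) (hX : ∀ v w : V, ω (X v) w = - ω v (X w))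
    (lam : F)
    (h : 2 * finrank F ↥(LinearMap.range (X - lam • 1)) < finrank F V) :
    lam = 0 :=
  stmt_6_general F V ω hnd X hX lam h
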